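/- Let H be a real Hilbert space, A : H → H a continuous self-adjoint nonnegative linear operator, 0 ≤ p ≤ 1, γ ≥ 1, and u₀ ∈ H with ⟨Au₀,u₀⟩ > 0. Let u : [0,∞) → H be a C¹ solution of u'(t) + (1+t)^{p} ⟨Au(t),u(t)⟩^γ A u(t) = 0 with u(0) = u₀, and assume ⟨Au(t),u(t)⟩ > 0 and |Au(t)| > 0 for all t ≥ 0. Then the ratios |Au(t)|²/⟨Au(t),u(t)⟩ and ⟨A²u(t), Au(t)⟩/|Au(t)|² are nonincreasing in t; in particular |Au(t)|²/⟨Au(t),u(t)⟩ ≤ |Au₀|²/⟨Au₀,u₀⟩ and ⟨A²u(t),Au(t)⟩/|Au(t)|² ≤ ⟨A²u₀,Au₀⟩/|Au₀|² for all t ≥ 0. -/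

import Mathlib

/-!
Along `w' = -c A w` with `c ≥ 0` the moments `mₖ = ⟨Aᵏ w, w⟩` satisfy `mₖ' = -2c mₖ₊₁`, while
Cauchy–Schwarz for the nonnegative forms `⟨·,·⟩` and `⟨A·,·⟩` gives the log-convexity
`mₖ₊₁² ≤ mₖ mₖ₊₂`. Hence `(mₖ₊₁ / mₖ)' = -2c (mₖ mₖ₊₂ - mₖ₊₁²) / mₖ² ≤ 0`. The two ratios of the
theorem are `m₂/m₁` along `u` and `m₁/m₀` along `A u`, which solves the same equation.
-/

open Real
open scoped RealInnerProductSpace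

/-- `u` (with derivative `u'`) is a global C¹ solution on `[0,∞)` of the parabolic
Cauchy problem `u' + (1+t)^{p} ⟨Au,u⟩^γ A u = 0`, `u(0) = u₀`. -/
def IsParSolution {H : Type*} [NormedAddCommGroup H] [InnerProductSpace ℝ H]
    (A : H →L[ℝ] H) (p γ : ℝ) (u₀ : H) (u u' : ℝ → H) : Prop :=
  u 0 = u₀ ∧
  (∀ t ∈ Set.Ici (0:ℝ), HasDerivWithinAt u (u' t) (Set.Ici 0) t) ∧
  ContinuousOn u' (Set.Ici 0) ∧
  (∀ t ∈ Set.Ici (0:ℝ),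
    u' t + ((1+t) ^ p * ⟪A (u t), u t⟫ ^ γ) • A (u t) = 0)

theorem antitoneOn_div_of_hasDerivWithinAt {D : Set ℝ} (hD : Convex ℝ D) {f g f' g' : ℝ → ℝ}
    (hf : ∀ t ∈ D, HasDerivWithinAt f (f' t) D t) (hg : ∀ t ∈ D, HasDerivWithinAt g (g' t) D t)
    (hg₀ : ∀ t ∈ D, g t ≠ 0) (hfg : ∀ t ∈ D, f' t * g t ≤ f t * g' t) :
    AntitoneOn (fun t => f t / g t) D := by
  have hdiv : ∀ t ∈ D, HasDerivWithinAt (fun t => f t / g t)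
      ((f' t * g t - f t * g' t) / g t ^ 2) D t := fun t ht =>
    (hf t ht).div (hg t ht) (hg₀ t ht)
  refine antitoneOn_of_hasDerivWithinAt_nonpos hD (fun t ht => (hdiv t ht).continuousWithinAt)
    (fun t ht => (hdiv t (interior_subset ht)).mono interior_subset) fun t ht => ?_
  exact div_nonpos_of_nonpos_of_nonneg (sub_nonpos.2 (hfg t (interior_subset ht))) (sq_nonneg _)

theorem antitoneOn_div_of_hasDerivWithinAt_neg_mul {D : Set ℝ} (hD : Convex ℝ D)
    {f g h c : ℝ → ℝ} (hf : ∀ t ∈ D, HasDerivWithinAt f (-c t * h t) D t)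
    (hg : ∀ t ∈ D, HasDerivWithinAt g (-c t * f t) D t) (hc : ∀ t ∈ D, 0 ≤ c t)
    (hg₀ : ∀ t ∈ D, g t ≠ 0) (hfgh : ∀ t ∈ D, f t ^ 2 ≤ g t * h t) :
    AntitoneOn (fun t => f t / g t) D :=
  antitoneOn_div_of_hasDerivWithinAt hD hf hg hg₀ fun t ht => by
    nlinarith [mul_le_mul_of_nonneg_left (hfgh t ht) (hc t ht)]

section InnerProductSpace

variable {H : Type*} [NormedAddCommGroup H] [InnerProductSpace ℝ H]
  {A B : H →L[ℝ] H} {w : ℝ → H} {c : ℝ → ℝ} {D : Set ℝ}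

theorem ContinuousLinearMap.IsPositive.inner_apply_sq_le (hA : A.IsPositive)
    (x y : H) : ⟪A x, y⟫ ^ 2 ≤ ⟪A x, x⟫ * ⟪A y, y⟫ := by
  have hyx : ⟪A y, x⟫ = ⟪A x, y⟫ := by rw [hA.inner_left_eq_inner_right, real_inner_comm]
  have hquad : ∀ s : ℝ, 0 ≤ ⟪A y, y⟫ * (s * s) + 2 * ⟪A x, y⟫ * s + ⟪A x, x⟫ := by
    intro s
    have h := hA.inner_nonneg_left (x + s • y)
    simp only [map_add, map_smul, inner_add_left, inner_add_right, real_inner_smul_left,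
      real_inner_smul_right, hyx] at h
    linarith
  have hdisc := discrim_le_zero hquad
  rw [discrim] at hdisc
  linarith

theorem HasDerivWithinAt.inner_apply_self (hB : (B : H →ₗ[ℝ] H).IsSymmetric) {w' : H}
    {s : Set ℝ} {t : ℝ} (hw : HasDerivWithinAt w w' s t) :
    HasDerivWithinAt (fun t => ⟪B (w t), w t⟫) (2 * ⟪B (w t), w'⟫) s t := by
  refine ((B.hasFDerivAt.comp_hasDerivWithinAt t hw).inner ℝ hw).congr_deriv ?_
  have hBw : ⟪B (w t), w'⟫ = ⟪w t, B w'⟫ := hB (w t) w'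
  rw [Function.comp_apply, real_inner_comm (w t) (B w'), ← hBw]
  ring

theorem hasDerivWithinAt_inner_apply_self_of_flow (hB : (B : H →ₗ[ℝ] H).IsSymmetric) {t : ℝ}
    (hw : HasDerivWithinAt w (-c t • A (w t)) D t) :
    HasDerivWithinAt (fun t => ⟪B (w t), w t⟫) (-(2 * c t) * ⟪A (w t), B (w t)⟫) D t := by
  convert hw.inner_apply_self hB using 1
  rw [real_inner_smul_right, real_inner_comm]
  ring

theorem HasDerivWithinAt.flow_apply {t : ℝ} (hw : HasDerivWithinAt w (-c t • A (w t)) D t) :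
    HasDerivWithinAt (fun t => A (w t)) (-c t • A (A (w t))) D t :=
  (A.hasFDerivAt.comp_hasDerivWithinAt t hw).congr_deriv (by simp)

theorem antitoneOn_inner_apply_self_div_norm_sq_of_flow (hA : (A : H →ₗ[ℝ] H).IsSymmetric)
    (hD : Convex ℝ D) (hw : ∀ t ∈ D, HasDerivWithinAt w (-c t • A (w t)) D t)
    (hc : ∀ t ∈ D, 0 ≤ c t) (hw₀ : ∀ t ∈ D, 0 < ‖w t‖) :
    AntitoneOn (fun t => ⟪A (w t), w t⟫ / ‖w t‖ ^ 2) D := by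
  simp only [← real_inner_self_eq_norm_sq]
  refine antitoneOn_div_of_hasDerivWithinAt_neg_mul (c := fun t => 2 * c t) hD
    (fun t ht => hasDerivWithinAt_inner_apply_self_of_flow hA (hw t ht))
    (fun t ht => hasDerivWithinAt_inner_apply_self_of_flow
      (B := ContinuousLinearMap.id ℝ H) LinearMap.IsSymmetric.id (hw t ht))
    (fun t ht => by linarith [hc t ht]) (fun t ht => ?_) fun t ht => ?_
  · simpa using (hw₀ t ht).ne'
  · rw [sq, real_inner_comm]
    exact real_inner_mul_inner_self_le _ _

theorem antitoneOn_norm_apply_sq_div_inner_apply_self_of_flow (hA : A.IsPositive)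
    (hD : Convex ℝ D) (hw : ∀ t ∈ D, HasDerivWithinAt w (-c t • A (w t)) D t)
    (hc : ∀ t ∈ D, 0 ≤ c t) (hw₀ : ∀ t ∈ D, 0 < ⟪A (w t), w t⟫) :
    AntitoneOn (fun t => ‖A (w t)‖ ^ 2 / ⟪A (w t), w t⟫) D := by
  simp only [← real_inner_self_eq_norm_sq]
  refine antitoneOn_div_of_hasDerivWithinAt_neg_mul (c := fun t => 2 * c t) hD
    (fun t ht => hasDerivWithinAt_inner_apply_self_of_flow
      (B := ContinuousLinearMap.id ℝ H) LinearMap.IsSymmetric.id (hw t ht).flow_apply)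
    (fun t ht => hasDerivWithinAt_inner_apply_self_of_flow hA.isSymmetric (hw t ht))
    (fun t ht => by linarith [hc t ht]) (fun t ht => (hw₀ t ht).ne') fun t ht => ?_
  exact hA.inner_apply_sq_le (w t) (A (w t))

end InnerProductSpace

theorem parabolic_ratio_monotone_general
    {H : Type*} [NormedAddCommGroup H] [InnerProductSpace ℝ H]
    (A : H →L[ℝ] H)
    (hA_sa : ∀ x y : H, ⟪A x, y⟫ = ⟪x, A y⟫)
    (hA_nn : ∀ x : H, 0 ≤ ⟪A x, x⟫)
    (p γ : ℝ)
    (u₀ : H)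
    (u u' : ℝ → H) (hu : IsParSolution A p γ u₀ u u')
    (hpos1 : ∀ t ∈ Set.Ici (0:ℝ), 0 < ⟪A (u t), u t⟫)
    (hpos2 : ∀ t ∈ Set.Ici (0:ℝ), 0 < ‖A (u t)‖) :
    AntitoneOn (fun t => ‖A (u t)‖ ^ 2 / ⟪A (u t), u t⟫) (Set.Ici (0:ℝ)) ∧
    AntitoneOn (fun t => ⟪A (A (u t)), A (u t)⟫ / ‖A (u t)‖ ^ 2) (Set.Ici (0:ℝ)) ∧
    (∀ t ∈ Set.Ici (0:ℝ),
      ‖A (u t)‖ ^ 2 / ⟪A (u t), u t⟫ ≤ ‖A u₀‖ ^ 2 / ⟪A u₀, u₀⟫ ∧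
      ⟪A (A (u t)), A (u t)⟫ / ‖A (u t)‖ ^ 2 ≤ ⟪A (A u₀), A u₀⟫ / ‖A u₀‖ ^ 2) := by
  obtain ⟨rfl, hderiv, -, heq⟩ := hu
  have hA : A.IsPositive := (A.isPositive_iff).2 ⟨hA_sa, hA_nn⟩
  set c : ℝ → ℝ := fun t => (1 + t) ^ p * ⟪A (u t), u t⟫ ^ γ
  have hc : ∀ t ∈ Set.Ici (0:ℝ), 0 ≤ c t := fun t (ht : 0 ≤ t) =>
    mul_nonneg (rpow_nonneg (by linarith) p) (rpow_nonneg (hA_nn (u t)) γ)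
  have hflow : ∀ t ∈ Set.Ici (0:ℝ), HasDerivWithinAt u (-c t • A (u t)) (Set.Ici 0) t :=
    fun t ht => by simpa [neg_smul, eq_neg_of_add_eq_zero_left (heq t ht)] using hderiv t ht
  have h₁ := antitoneOn_norm_apply_sq_div_inner_apply_self_of_flow hA (convex_Ici 0) hflow hc
    hpos1
  have h₂ := antitoneOn_inner_apply_self_div_norm_sq_of_flow hA.isSymmetric (convex_Ici 0)
    (fun t ht => (hflow t ht).flow_apply) hc hpos2
  exact ⟨h₁, h₂, fun t (ht : 0 ≤ t) =>
    ⟨h₁ Set.self_mem_Ici ht ht, h₂ Set.self_mem_Ici ht ht⟩⟩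

/-- Estimate (3.1): along solutions of the parabolic problem, the ratios
`|Au|²/⟨Au,u⟩` and `⟨A²u,Au⟩/|Au|²` are nonincreasing in time; in particular
they are bounded by their values at `t = 0`. -/
theorem parabolic_ratio_monotone
    {H : Type*} [NormedAddCommGroup H] [InnerProductSpace ℝ H]
    (A : H →L[ℝ] H)
    (hA_sa : ∀ x y : H, ⟪A x, y⟫ = ⟪x, A y⟫)
    (hA_nn : ∀ x : H, 0 ≤ ⟪A x, x⟫)
    (p γ : ℝ) (hp0 : 0 ≤ p) (hp1 : p ≤ 1) (hγ : 1 ≤ γ)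
    (u₀ : H) (hmdg : 0 < ⟪A u₀, u₀⟫)
    (u u' : ℝ → H) (hu : IsParSolution A p γ u₀ u u')
    (hpos1 : ∀ t ∈ Set.Ici (0:ℝ), 0 < ⟪A (u t), u t⟫)
    (hpos2 : ∀ t ∈ Set.Ici (0:ℝ), 0 < ‖A (u t)‖) :
    AntitoneOn (fun t => ‖A (u t)‖ ^ 2 / ⟪A (u t), u t⟫) (Set.Ici (0:ℝ)) ∧
    AntitoneOn (fun t => ⟪A (A (u t)), A (u t)⟫ / ‖A (u t)‖ ^ 2) (Set.Ici (0:ℝ)) ∧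
    (∀ t ∈ Set.Ici (0:ℝ),
      ‖A (u t)‖ ^ 2 / ⟪A (u t), u t⟫ ≤ ‖A u₀‖ ^ 2 / ⟪A u₀, u₀⟫ ∧
      ⟪A (A (u t)), A (u t)⟫ / ‖A (u t)‖ ^ 2 ≤ ⟪A (A u₀), A u₀⟫ / ‖A u₀‖ ^ 2) :=
  parabolic_ratio_monotone_general A hA_sa hA_nn p γ u₀ u u' hu hpos1 hpos2
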